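/- Let n ∈ ℝ³ with n₁² + n₂² + n₃² = 1, let a ∈ ℝ³ and φ ∈ ℝ. Then, for 2×2 complex matrices, exp(−i(φ/2)(n·σ)) * (a·σ) * exp(i(φ/2)(n·σ)) = b·σ, where b := cos φ · a − sin φ · (a ×ᵥ n) + (1 − cos φ)(a·n)·n, ×ᵥ is the standard cross product, and a·n the Euclidean inner product. In other words, conjugation by the unitary exp(−i(φ/2)n·σ) implements the rotation by angle φ about the axis n. -/

import Mathlib

/-! The Pauli matrices multiply as `(v·σ)(w·σ) = (v ⬝ᵥ w) 1 + i (v ⨯₃ w)·σ`. For a unit vector `n`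
this gives `(n·σ)² = 1`, so `exp(iθ n·σ) = cos θ + i sin θ n·σ`, and the conjugate of `a·σ` by
`cos(φ/2) - i sin(φ/2) n·σ` expands, by the same product rule, into
`c² a - 2cs (a ⨯₃ n) + s² (2 (a ⬝ᵥ n) n - a)` with `c = cos(φ/2)`, `s = sin(φ/2)`;
the half-angle formulas turn this into Rodrigues' rotation formula. -/

open Matrix

/-- The Pauli matrices. -/
noncomputable def pauli1 : Matrix (Fin 2) (Fin 2) ℂ := !![0, 1; 1, 0]
noncomputable def pauli2 : Matrix (Fin 2) (Fin 2) ℂ := !![0, -Complex.I; Complex.I, 0]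
noncomputable def pauli3 : Matrix (Fin 2) (Fin 2) ℂ := !![1, 0; 0, -1]

/-- For `v ∈ ℝ³`, the matrix `v·σ = v₁σ₁ + v₂σ₂ + v₃σ₃`. -/
noncomputable def pauliDot (v : Fin 3 → ℝ) : Matrix (Fin 2) (Fin 2) ℂ :=
  (v 0 : ℂ) • pauli1 + (v 1 : ℂ) • pauli2 + (v 2 : ℂ) • pauli3

theorem NormedSpace.exp_smul_of_mul_self_eq_one {𝔸 : Type*} [NormedRing 𝔸] [NormedAlgebra ℂ 𝔸]
    [CompleteSpace 𝔸] {N : 𝔸} (hN : N * N = 1) (c : ℂ) :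
    NormedSpace.exp (c • N) = Complex.cosh c • (1 : 𝔸) + Complex.sinh c • N := by
  refine (NormedSpace.exp_series_hasSum_exp' (𝕂 := ℂ) (c • N)).unique ?_
  have hN_even : ∀ k : ℕ, N ^ (2 * k) = 1 := fun k => by rw [pow_mul, sq, hN, one_pow]
  refine HasSum.even_add_odd ?_ ?_
  · convert (Complex.hasSum_cosh c).smul_const (1 : 𝔸) using 2 with k
    rw [smul_pow, hN_even, smul_smul, div_eq_inv_mul]
  · convert (Complex.hasSum_sinh c).smul_const N using 2 with k
    rw [smul_pow, pow_succ N, hN_even, one_mul, smul_smul, div_eq_inv_mul]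

theorem Matrix.exp_I_mul_smul_of_mul_self_eq_one {m : Type*} [Fintype m] [DecidableEq m]
    {N : Matrix m m ℂ} (hN : N * N = 1) (θ : ℂ) :
    NormedSpace.exp ((Complex.I * θ) • N) = Complex.cos θ • 1 + (Complex.I * Complex.sin θ) • N := by
  -- `exp` depends only on the topology, so any Banach algebra norm on matrices may be used.
  open scoped Matrix.Norms.Operator in
  have hexp := NormedSpace.exp_smul_of_mul_self_eq_one hN (θ * Complex.I)
  rwa [Complex.cosh_mul_I, Complex.sinh_mul_I, mul_comm θ, mul_comm (Complex.sin θ)] at hexp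

theorem pauliDot_add (v w : Fin 3 → ℝ) : pauliDot (v + w) = pauliDot v + pauliDot w := by
  simp only [pauliDot, Pi.add_apply, Complex.ofReal_add, add_smul]
  abel

theorem pauliDot_sub (v w : Fin 3 → ℝ) : pauliDot (v - w) = pauliDot v - pauliDot w := by
  simp only [pauliDot, Pi.sub_apply, Complex.ofReal_sub, sub_smul]
  abel

theorem pauliDot_smul (r : ℝ) (v : Fin 3 → ℝ) : pauliDot (r • v) = (r : ℂ) • pauliDot v := by
  simp only [pauliDot, Pi.smul_apply, smul_eq_mul, Complex.ofReal_mul, smul_add, smul_smul]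

theorem pauliDot_mul (v w : Fin 3 → ℝ) :
    pauliDot v * pauliDot w = ((v ⬝ᵥ w : ℝ) : ℂ) • 1 + Complex.I • pauliDot (v ⨯₃ w) := by
  ext i j
  fin_cases i <;> fin_cases j <;>
    simp [pauliDot, pauli1, pauli2, pauli3, Matrix.mul_apply, Fin.sum_univ_succ,
      dotProduct, crossProduct, Complex.ext_iff] <;>
    constructor <;> ring

theorem pauliDot_mul_self (v : Fin 3 → ℝ) : pauliDot v * pauliDot v = ((v ⬝ᵥ v : ℝ) : ℂ) • 1 := by
  rw [pauliDot_mul, cross_self, ← zero_smul ℝ 0, pauliDot_smul]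
  simp

theorem pauliDot_mul_sub_mul (v w : Fin 3 → ℝ) :
    pauliDot v * pauliDot w - pauliDot w * pauliDot v = (2 * Complex.I) • pauliDot (v ⨯₃ w) := by
  rw [pauliDot_mul, pauliDot_mul, dotProduct_comm, ← cross_anticomm v w, ← neg_one_smul ℝ (v ⨯₃ w),
    pauliDot_smul]
  module

theorem pauliDot_mul_mul_self (v w : Fin 3 → ℝ) :
    pauliDot w * pauliDot v * pauliDot w = pauliDot ((2 * (v ⬝ᵥ w)) • w - (w ⬝ᵥ w) • v) := by
  rw [mul_assoc, pauliDot_mul, mul_add, mul_smul_comm, mul_smul_comm, pauliDot_mul, mul_one,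
    dot_cross_self, cross_cross_eq_smul_sub_smul', pauliDot_sub, pauliDot_sub, pauliDot_smul,
    pauliDot_smul, pauliDot_smul, smul_add, smul_smul, smul_smul, Complex.I_mul_I]
  push_cast
  module

theorem pauliDot_conj (a n : Fin 3 → ℝ) (c s : ℝ) :
    ((c : ℂ) • 1 - (Complex.I * s) • pauliDot n) * pauliDot a *
        ((c : ℂ) • 1 + (Complex.I * s) • pauliDot n) =
      pauliDot (c ^ 2 • a - (2 * c * s) • (a ⨯₃ n) +
        s ^ 2 • ((2 * (a ⬝ᵥ n)) • n - (n ⬝ᵥ n) • a)) := by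
  have hexpand : ((c : ℂ) • 1 - (Complex.I * s) • pauliDot n) * pauliDot a *
        ((c : ℂ) • 1 + (Complex.I * s) • pauliDot n) =
      (c : ℂ) ^ 2 • pauliDot a + (Complex.I * c * s) •
        (pauliDot a * pauliDot n - pauliDot n * pauliDot a) +
        (s : ℂ) ^ 2 • (pauliDot n * pauliDot a * pauliDot n) := by
    simp only [sub_mul, mul_add, smul_mul_assoc, mul_smul_comm, one_mul, mul_one,
      smul_sub, smul_smul, ← mul_assoc]
    match_scalars
    · ring
    · ring
    · ring
    · linear_combination (-(s : ℂ) ^ 2) * Complex.I_sq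
  rw [hexpand, pauliDot_mul_sub_mul, pauliDot_mul_mul_self]
  simp only [pauliDot_add, pauliDot_sub, pauliDot_smul]
  push_cast
  match_scalars
  · rfl
  · linear_combination (2 * c * s : ℂ) * Complex.I_sq
  · rfl

/-- Conjugation by `exp(−i(φ/2)(n·σ))` (with `|n| = 1`) implements the rotation
by angle `φ` about the axis `n`:
`exp(−i(φ/2)(n·σ)) (a·σ) exp(i(φ/2)(n·σ)) = b·σ` where
`b = cos φ · a − sin φ · (a ×ᵥ n) + (1 − cos φ)(a·n)·n`. -/
theorem stmt_15 (n a : Fin 3 → ℝ) (hn : n 0 ^ 2 + n 1 ^ 2 + n 2 ^ 2 = 1) (φ : ℝ) :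
    NormedSpace.exp ((-(Complex.I * (φ / 2))) • pauliDot n) * pauliDot a *
      NormedSpace.exp ((Complex.I * (φ / 2)) • pauliDot n) =
    pauliDot (Real.cos φ • a - Real.sin φ • (a ⨯₃ n) +
      ((1 - Real.cos φ) * (a ⬝ᵥ n)) • n) := by
  have hnn : n ⬝ᵥ n = 1 := by simpa [dotProduct, Fin.sum_univ_three, sq] using hn
  have hN : pauliDot n * pauliDot n = 1 := by simp [pauliDot_mul_self, hnn]
  have hcos : Complex.cos (φ / 2) = (Real.cos (φ / 2) : ℂ) := by push_cast; rfl
  have hsin : Complex.sin (φ / 2) = (Real.sin (φ / 2) : ℂ) := by push_cast; rfl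
  rw [← mul_neg, Matrix.exp_I_mul_smul_of_mul_self_eq_one hN,
    Matrix.exp_I_mul_smul_of_mul_self_eq_one hN, Complex.cos_neg, Complex.sin_neg, mul_neg,
    neg_smul, ← sub_eq_add_neg, hcos, hsin, pauliDot_conj, hnn]
  have hsin_double : 2 * Real.cos (φ / 2) * Real.sin (φ / 2) = Real.sin φ := by
    rw [mul_right_comm, ← Real.sin_two_mul, mul_div_cancel₀ _ two_ne_zero]
  have hcos_sq : Real.cos (φ / 2) ^ 2 = 1 / 2 + Real.cos φ / 2 := by
    rw [Real.cos_sq, mul_div_cancel₀ _ two_ne_zero]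
  have hsin_sq : Real.sin (φ / 2) ^ 2 = 1 / 2 - Real.cos φ / 2 := by
    rw [Real.sin_sq, hcos_sq]; ring
  rw [hsin_double, hcos_sq, hsin_sq]
  congr 1
  module
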